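/- Let X be a real Banach space, let F ⊆ X be a nonempty closed bounded convex set, and let Ω ⊆ X be a nonempty closed convex set. Let x̄ ∉ Ω be such that Π^F_Ω(x̄) ≠ ∅ and r := T^F_Ω(x̄) < ∞, and set Ω_r := {x ∈ X : T^F_Ω(x) ≤ r}. Then for every w̄ ∈ Π^F_Ω(x̄), the subdifferential of convex analysis satisfies ∂T^F_Ω(x̄) = N(x̄; Ω_r) ∩ (−∂ρ_F(w̄ − x̄)), and this set is contained in N(w̄; Ω) ∩ (−∂ρ_F(w̄ − x̄)). -/

import Mathlib

open scoped Pointwise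

/-- The minimal time function `T^F_Ω(x) := inf{t ≥ 0 : Ω ∩ (x + tF) ≠ ∅}`,
with values in the extended reals (`sInf ∅ = ⊤`). -/
noncomputable def minTime {X : Type*} [AddCommGroup X] [Module ℝ X]
    (F Ω : Set X) (x : X) : EReal :=
  sInf {r : EReal | ∃ t : ℝ, 0 ≤ t ∧ r = (t : EReal) ∧ ∃ f ∈ F, x + t • f ∈ Ω}

/-- The Minkowski gauge `ρ_F(x) := inf{t ≥ 0 : x ∈ tF}`, with values in the
extended reals (`sInf ∅ = ⊤`). -/
noncomputable def gaugeE {X : Type*} [AddCommGroup X] [Module ℝ X]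
    (F : Set X) (x : X) : EReal :=
  sInf {r : EReal | ∃ t : ℝ, 0 ≤ t ∧ r = (t : EReal) ∧ ∃ f ∈ F, x = t • f}

/-- The generalized projection `Π^F_Ω(x) := (x + T^F_Ω(x)·F) ∩ Ω`. -/
noncomputable def genProj {X : Type*} [AddCommGroup X] [Module ℝ X]
    (F Ω : Set X) (x : X) : Set X :=
  {w | w ∈ Ω ∧ ∃ f ∈ F, w = x + (minTime F Ω x).toReal • f}

/-- The subdifferential of convex analysis of `φ : X → (−∞, ∞]` at `xb`. -/
def subdiff {X : Type*} [NormedAddCommGroup X] [NormedSpace ℝ X]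
    (φ : X → EReal) (xb : X) : Set (X →L[ℝ] ℝ) :=
  {p | ∀ x : X, ((p (x - xb) : ℝ) : EReal) + φ xb ≤ φ x}

/-- The normal cone of convex analysis to `Ω` at `xb`. -/
def normalCone {X : Type*} [NormedAddCommGroup X] [NormedSpace ℝ X]
    (Ω : Set X) (xb : X) : Set (X →L[ℝ] ℝ) :=
  {p | ∀ x ∈ Ω, p (x - xb) ≤ 0}

/-!
Write `r = T(x̄)` and `w̄ - x̄ = r f` with `f ∈ F`. Testing the subgradient inequality of
`T = T^F_Ω` at the points `w̄ - u` (with `u ∈ tF`) and at the points of `Ω` shows that every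
subgradient `p` of `T` at `x̄` satisfies `-p ∈ ∂ρ_F(w̄ - x̄)` and `p ∈ N(w̄; Ω)`. Conversely,
if `-p ∈ ∂ρ_F(w̄ - x̄)`, positive homogeneity of the gauge gives `p (w̄ - x̄) = -r` and
`-p ≤ 1` on `F`; if moreover `p ∈ N(x̄; Ω_r)`, then for `x + t g ∈ Ω` the point
`x + t g - r f` lies in `Ω_r`, which yields `p (x - x̄) + r ≤ t`, i.e. the subgradient
inequality.
-/

section MinimalTime

variable {X : Type*} [AddCommGroup X] [Module ℝ X] {F Ω : Set X}

theorem minTime_le {x g : X} {t : ℝ} (ht : 0 ≤ t) (hg : g ∈ F) (hx : x + t • g ∈ Ω) :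
    minTime F Ω x ≤ t :=
  sInf_le ⟨t, ht, rfl, g, hg, hx⟩

theorem le_minTime_iff {x : X} {c : EReal} :
    c ≤ minTime F Ω x ↔ ∀ t : ℝ, 0 ≤ t → ∀ g ∈ F, x + t • g ∈ Ω → c ≤ t := by
  simp only [minTime, le_sInf_iff, Set.mem_ofPred_eq]
  constructor
  · intro h t ht g hg hx
    exact h _ ⟨t, ht, rfl, g, hg, hx⟩
  · rintro h _ ⟨t, ht, rfl, g, hg, hx⟩
    exact h t ht g hg hx

theorem minTime_nonneg (x : X) : 0 ≤ minTime F Ω x :=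
  le_minTime_iff.2 fun _ ht _ _ _ ↦ EReal.coe_nonneg.2 ht

theorem coe_toReal_minTime {x : X} (hx : minTime F Ω x ≠ ⊤) :
    ((minTime F Ω x).toReal : EReal) = minTime F Ω x :=
  EReal.coe_toReal hx (ne_bot_of_le_ne_bot EReal.zero_ne_bot (minTime_nonneg x))

theorem gaugeE_smul_le {g : X} {t : ℝ} (ht : 0 ≤ t) (hg : g ∈ F) : gaugeE F (t • g) ≤ t :=
  sInf_le ⟨t, ht, rfl, g, hg, rfl⟩

theorem le_gaugeE_iff {u : X} {c : EReal} :
    c ≤ gaugeE F u ↔ ∀ t : ℝ, 0 ≤ t → ∀ g ∈ F, u = t • g → c ≤ t := by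
  simp only [gaugeE, le_sInf_iff, Set.mem_ofPred_eq]
  constructor
  · intro h t ht g hg hu
    exact h _ ⟨t, ht, rfl, g, hg, hu⟩
  · rintro h _ ⟨t, ht, rfl, g, hg, hu⟩
    exact h t ht g hg hu

theorem sub_eq_smul_of_mem_genProj {x w : X} (hw : w ∈ genProj F Ω x) :
    ∃ f ∈ F, w - x = (minTime F Ω x).toReal • f := by
  obtain ⟨-, f, hf, rfl⟩ := hw
  exact ⟨f, hf, add_sub_cancel_left _ _⟩

theorem gaugeE_sub_of_mem_genProj {x w : X} (hw : w ∈ genProj F Ω x)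
    (hx : minTime F Ω x ≠ ⊤) : gaugeE F (w - x) = minTime F Ω x := by
  obtain ⟨f, hf, hwx⟩ := sub_eq_smul_of_mem_genProj hw
  refine le_antisymm ?_ (le_gaugeE_iff.2 fun t ht g hg hu ↦ minTime_le ht hg ?_)
  · rw [hwx]
    exact (gaugeE_smul_le (EReal.toReal_nonneg (minTime_nonneg x)) hf).trans_eq
      (coe_toReal_minTime hx)
  · rw [← hu, add_sub_cancel]
    exact hw.1

end MinimalTime

section Subdifferential

variable {X : Type*} [NormedAddCommGroup X] [NormedSpace ℝ X]

theorem mem_subdiff_iff_of_eq_coe {φ : X → EReal} {xb : X} {c : ℝ} (hc : φ xb = c)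
    {p : X →L[ℝ] ℝ} : p ∈ subdiff φ xb ↔ ∀ x, ((p (x - xb) + c : ℝ) : EReal) ≤ φ x := by
  simp only [subdiff, Set.mem_ofPred_eq, hc, EReal.coe_add]

theorem subdiff_subset_normalCone_sublevel {φ : X → EReal} {xb : X} {c : ℝ} (hc : φ xb = c) :
    subdiff φ xb ⊆ normalCone {x | φ x ≤ φ xb} xb := by
  intro p hp x hx
  have := ((mem_subdiff_iff_of_eq_coe hc).1 hp x).trans (hc ▸ hx)
  linarith [EReal.coe_le_coe_iff.1 this]

/-- Euler's identity: test the subgradient inequality at `0` and at `2 c f`. -/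
theorem apply_eq_of_mem_subdiff_gaugeE {F : Set X} {f : X} {c : ℝ} (hf : f ∈ F) (hc : 0 ≤ c)
    (hcf : gaugeE F (c • f) = c) {q : X →L[ℝ] ℝ} (hq : q ∈ subdiff (gaugeE F) (c • f)) :
    q (c • f) = c := by
  rw [mem_subdiff_iff_of_eq_coe hcf] at hq
  have hg0 := gaugeE_smul_le (F := F) (le_refl 0) hf
  rw [zero_smul] at hg0
  have h0 := EReal.coe_le_coe_iff.1 <| (hq 0).trans hg0
  have h2 := EReal.coe_le_coe_iff.1 <| (hq ((2 * c) • f)).trans <|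
    gaugeE_smul_le (by linarith) hf
  have h2c : (2 * c) • f - c • f = c • f := by rw [← sub_smul]; ring_nf
  rw [h2c] at h2
  simp only [zero_sub, map_neg] at h0
  linarith

theorem apply_le_one_of_mem_subdiff_gaugeE {F : Set X} {u g : X} {c : ℝ}
    (hu : gaugeE F u = c) {q : X →L[ℝ] ℝ} (hq : q ∈ subdiff (gaugeE F) u) (hqu : q u = c)
    (hg : g ∈ F) : q g ≤ 1 := by
  have hg1 := gaugeE_smul_le (F := F) zero_le_one hg
  rw [one_smul] at hg1
  have := EReal.coe_le_coe_iff.1 <| ((mem_subdiff_iff_of_eq_coe hu).1 hq g).trans hg1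
  rw [map_sub, hqu] at this
  linarith

end Subdifferential

section GeneralizedProjection

variable {X : Type*} [NormedAddCommGroup X] [NormedSpace ℝ X] {F Ω : Set X} {xb wb : X}
  {p : X →L[ℝ] ℝ}

theorem neg_mem_subdiff_gaugeE_of_mem_subdiff_minTime (hwb : wb ∈ genProj F Ω xb)
    (hxb : minTime F Ω xb ≠ ⊤) (hp : p ∈ subdiff (minTime F Ω) xb) :
    -p ∈ subdiff (gaugeE F) (wb - xb) := by
  have hr := (coe_toReal_minTime hxb).symm
  rw [mem_subdiff_iff_of_eq_coe hr] at hp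
  rw [mem_subdiff_iff_of_eq_coe ((gaugeE_sub_of_mem_genProj hwb hxb).trans hr)]
  refine fun u ↦ le_gaugeE_iff.2 fun t ht g hg hu ↦ ?_
  have hreach : minTime F Ω (wb - u) ≤ t :=
    minTime_le ht hg (by rw [← hu, sub_add_cancel]; exact hwb.1)
  have := EReal.coe_le_coe_iff.1 ((hp (wb - u)).trans hreach)
  refine EReal.coe_le_coe_iff.2 (le_of_eq_of_le ?_ this)
  simp only [neg_apply, map_sub]
  ring

theorem apply_sub_eq_of_neg_mem_subdiff_gaugeE (hwb : wb ∈ genProj F Ω xb)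
    (hxb : minTime F Ω xb ≠ ⊤) (hp : -p ∈ subdiff (gaugeE F) (wb - xb)) :
    p (wb - xb) = -(minTime F Ω xb).toReal := by
  obtain ⟨f, hf, hwx⟩ := sub_eq_smul_of_mem_genProj hwb
  have hgauge := (gaugeE_sub_of_mem_genProj hwb hxb).trans (coe_toReal_minTime hxb).symm
  rw [hwx] at hp hgauge
  have := apply_eq_of_mem_subdiff_gaugeE hf (EReal.toReal_nonneg (minTime_nonneg xb)) hgauge hp
  rw [hwx]
  simpa [neg_eq_iff_eq_neg] using this

theorem mem_normalCone_of_mem_subdiff_minTime (hwb : wb ∈ genProj F Ω xb)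
    (hxb : minTime F Ω xb ≠ ⊤) (hp : p ∈ subdiff (minTime F Ω) xb) : p ∈ normalCone Ω wb := by
  have hpw := apply_sub_eq_of_neg_mem_subdiff_gaugeE hwb hxb
    (neg_mem_subdiff_gaugeE_of_mem_subdiff_minTime hwb hxb hp)
  obtain ⟨f, hf, -⟩ := sub_eq_smul_of_mem_genProj hwb
  rw [mem_subdiff_iff_of_eq_coe (coe_toReal_minTime hxb).symm] at hp
  intro w hw
  have hw0 : minTime F Ω w ≤ (0 : ℝ) := minTime_le le_rfl hf (by simpa)
  have := EReal.coe_le_coe_iff.1 ((hp w).trans hw0)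
  have hsplit : w - wb = (w - xb) - (wb - xb) := by abel
  rw [hsplit, map_sub, hpw]
  linarith

theorem mem_subdiff_minTime_of_mem_normalCone (hwb : wb ∈ genProj F Ω xb)
    (hxb : minTime F Ω xb ≠ ⊤) (hN : p ∈ normalCone {x | minTime F Ω x ≤ minTime F Ω xb} xb)
    (hp : -p ∈ subdiff (gaugeE F) (wb - xb)) : p ∈ subdiff (minTime F Ω) xb := by
  set r := (minTime F Ω xb).toReal
  have hr : minTime F Ω xb = r := (coe_toReal_minTime hxb).symm
  have hpw : p (wb - xb) = -r := apply_sub_eq_of_neg_mem_subdiff_gaugeE hwb hxb hp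
  have hle_one : ∀ g ∈ F, -p g ≤ 1 := fun g hg ↦ by
    simpa using apply_le_one_of_mem_subdiff_gaugeE
      ((gaugeE_sub_of_mem_genProj hwb hxb).trans hr) hp (by simp [hpw]) hg
  obtain ⟨f, hf, hwx⟩ := sub_eq_smul_of_mem_genProj hwb
  rw [mem_subdiff_iff_of_eq_coe hr]
  refine fun x ↦ le_minTime_iff.2 fun t ht g hg hx ↦ EReal.coe_le_coe_iff.2 ?_
  -- `x + t g - r f` reaches `Ω` in time `r`, hence lies in the sublevel set `Ω_r`.
  have hsub : minTime F Ω (x + t • g - r • f) ≤ minTime F Ω xb :=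
    hr ▸ minTime_le (EReal.toReal_nonneg (minTime_nonneg xb)) hf (by simpa using hx)
  have hN' := hN _ hsub
  have hsplit : x + t • g - r • f - xb = (x - xb) + t • g - (wb - xb) := by rw [hwx]; abel
  rw [hsplit, map_sub, map_add, map_smul, hpw, smul_eq_mul] at hN'
  nlinarith [mul_le_mul_of_nonneg_left (hle_one g hg) ht]

end GeneralizedProjection

theorem stmt_2_general {X : Type*} [NormedAddCommGroup X] [NormedSpace ℝ X]
    (F Ω : Set X) (xb : X) (hfin : minTime F Ω xb ≠ ⊤) :
    ∀ wb ∈ genProj F Ω xb,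
      subdiff (minTime F Ω) xb =
        normalCone {x | minTime F Ω x ≤ minTime F Ω xb} xb ∩
          (-(subdiff (gaugeE F) (wb - xb))) ∧
      subdiff (minTime F Ω) xb ⊆
        normalCone Ω wb ∩ (-(subdiff (gaugeE F) (wb - xb))) := by
  intro wb hwb
  have hneg : ∀ p ∈ subdiff (minTime F Ω) xb, p ∈ -subdiff (gaugeE F) (wb - xb) :=
    fun p hp ↦ Set.mem_neg.2 (neg_mem_subdiff_gaugeE_of_mem_subdiff_minTime hwb hfin hp)
  have hsublevel := subdiff_subset_normalCone_sublevel (coe_toReal_minTime hfin).symm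
  refine ⟨Set.Subset.antisymm (fun p hp ↦ ⟨hsublevel hp, hneg p hp⟩) ?_, fun p hp ↦
    ⟨mem_normalCone_of_mem_subdiff_minTime hwb hfin hp, hneg p hp⟩⟩
  rintro p ⟨hN, hp⟩
  exact mem_subdiff_minTime_of_mem_normalCone hwb hfin hN (Set.mem_neg.1 hp)

/-- Subgradients of convex minimal time functions at out-of-set points:
for every `w̄ ∈ Π^F_Ω(x̄)`,
`∂T^F_Ω(x̄) = N(x̄; Ω_r) ∩ (−∂ρ_F(w̄ − x̄)) ⊆ N(w̄; Ω) ∩ (−∂ρ_F(w̄ − x̄))`,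
where `Ω_r = {x : T^F_Ω(x) ≤ r}` with `r = T^F_Ω(x̄)`. -/
theorem stmt_2 {X : Type*} [NormedAddCommGroup X] [NormedSpace ℝ X] [CompleteSpace X]
    (F Ω : Set X) (hFne : F.Nonempty) (hFcl : IsClosed F)
    (hFbd : Bornology.IsBounded F) (hFconv : Convex ℝ F)
    (hΩne : Ω.Nonempty) (hΩcl : IsClosed Ω) (hΩconv : Convex ℝ Ω)
    (xb : X) (hxb : xb ∉ Ω) (hproj : (genProj F Ω xb).Nonempty)
    (hfin : minTime F Ω xb ≠ ⊤) :
    ∀ wb ∈ genProj F Ω xb,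
      subdiff (minTime F Ω) xb =
        normalCone {x | minTime F Ω x ≤ minTime F Ω xb} xb ∩
          (-(subdiff (gaugeE F) (wb - xb))) ∧
      subdiff (minTime F Ω) xb ⊆
        normalCone Ω wb ∩ (-(subdiff (gaugeE F) (wb - xb))) :=
  stmt_2_general F Ω xb hfin
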